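/- Let p be an odd prime, n ≥ 1, and let R = Z[q, q^{-1}]. Let I ⊆ R be the ideal generated by p^n, p^{n−1}(q^p − q^{-p}), p^{n−2}(q^{p^2} − q^{-p^2}), …, p(q^{p^{n−1}} − q^{-p^{n−1}}), and q^{p^n} − q^{-p^n}. Suppose f_0, …, f_n ∈ R satisfy, for each 0 ≤ s ≤ n, the congruence q^{-2p^n} f_s(q) − q^{2p^n} g_s(q) ≡ (q^{-p^n} − q^{p^n}) h_s(q) (mod q^{p^{n−s}} − q^{-p^{n−s}}) for some g_s, h_s ∈ R (with the s = 0 congruence holding exactly). Then Σ_{s=0}^n p^s f_s ≡ Σ_{s=0}^n p^s g_s (mod I). -/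
import Mathlib


open LaurentPolynomial

/-- Let `p` be an odd prime, `n ≥ 1`, `R = ℤ[q,q⁻¹]`, and let `I ⊆ R` be the ideal
generated by `p^n` and `p^(n-s)(q^(p^s) - q^(-p^s))` for `1 ≤ s ≤ n`. If
`f_s, g_s, h_s ∈ R` satisfy, for each `0 ≤ s ≤ n`,
`q^(-2p^n) f_s - q^(2p^n) g_s ≡ (q^(-p^n) - q^(p^n)) h_s (mod q^(p^(n-s)) - q^(-p^(n-s)))`,
with the `s = 0` congruence holding exactly, then
`Σ_{s=0}^n p^s f_s ≡ Σ_{s=0}^n p^s g_s (mod I)`. -/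
theorem stmt_14 (p n : ℕ) (hp : p.Prime) (hodd : Odd p) (hn : 1 ≤ n)
    (f g h : ℕ → LaurentPolynomial ℤ)
    (hexact : T (-2 * (p : ℤ) ^ n) * f 0 - T (2 * (p : ℤ) ^ n) * g 0
      = (T (-(p : ℤ) ^ n) - T ((p : ℤ) ^ n)) * h 0)
    (hcong : ∀ s : ℕ, 1 ≤ s → s ≤ n →
      T (-2 * (p : ℤ) ^ n) * f s - T (2 * (p : ℤ) ^ n) * g s
          - (T (-(p : ℤ) ^ n) - T ((p : ℤ) ^ n)) * h s
        ∈ Ideal.span {(T ((p : ℤ) ^ (n - s)) - T (-(p : ℤ) ^ (n - s)) : LaurentPolynomial ℤ)}) :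
    (∑ s ∈ Finset.range (n + 1), C ((p : ℤ) ^ s) * f s)
      - (∑ s ∈ Finset.range (n + 1), C ((p : ℤ) ^ s) * g s)
      ∈ Ideal.span (insert (C ((p : ℤ) ^ n))
          { x : LaurentPolynomial ℤ | ∃ s ∈ Finset.Icc 1 n,
              x = C ((p : ℤ) ^ (n - s)) * (T ((p : ℤ) ^ s) - T (-(p : ℤ) ^ s)) }) := by
  set I : Ideal (LaurentPolynomial ℤ) := Ideal.span (insert (C ((p : ℤ) ^ n))
          { x : LaurentPolynomial ℤ | ∃ s ∈ Finset.Icc 1 n,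
              x = C ((p : ℤ) ^ (n - s)) * (T ((p : ℤ) ^ s) - T (-(p : ℤ) ^ s)) }) with hIdef
  set a : ℤ := (p : ℤ) ^ n with ha
  -- p^s * (T(p^(n-s)) - T(-p^(n-s))) ∈ I for all s ≤ n
  have lem1 : ∀ s ≤ n, (C ((p : ℤ) ^ s) *
      (T ((p : ℤ) ^ (n - s)) - T (-(p : ℤ) ^ (n - s))) : LaurentPolynomial ℤ) ∈ I := by
    intro s hs
    rcases eq_or_lt_of_le hs with rfl | hlt
    · have h1 : (C ((p : ℤ) ^ s) : LaurentPolynomial ℤ) ∈ I :=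
        Ideal.subset_span (Set.mem_insert _ _)
      exact Ideal.mul_mem_right _ _ h1
    · apply Ideal.subset_span
      refine Set.mem_insert_iff.mpr (Or.inr ⟨n - s, Finset.mem_Icc.mpr ⟨by omega, by omega⟩, ?_⟩)
      rw [show n - (n - s) = s from by omega]
  -- T(p^n) - T(-p^n) ∈ I
  have lem2 : (T a - T (-a) : LaurentPolynomial ℤ) ∈ I := by
    have h0 := lem1 0 (Nat.zero_le n)
    simpa [ha] using h0
  -- T(2a) - T(-2a) ∈ I
  have hmulid : (T (2 * a) - T (-2 * a) : LaurentPolynomial ℤ)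
      = (T a - T (-a)) * (T a + T (-a)) := by
    rw [sub_mul, mul_add, mul_add, ← T_add, ← T_add, ← T_add, ← T_add]
    ring_nf
  have lem3 : (T (2 * a) - T (-2 * a) : LaurentPolynomial ℤ) ∈ I := by
    rw [hmulid]; exact Ideal.mul_mem_right _ _ lem2
  -- unified congruence
  have hA : ∀ s ≤ n, (T (-2 * a) * f s - T (2 * a) * g s - (T (-a) - T a) * h s
      : LaurentPolynomial ℤ)
      ∈ Ideal.span {(T ((p : ℤ) ^ (n - s)) - T (-(p : ℤ) ^ (n - s)) : LaurentPolynomial ℤ)} := by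
    intro s hs
    rcases Nat.eq_zero_or_pos s with rfl | hpos
    · rw [show (T (-2 * a) * f 0 - T (2 * a) * g 0 - (T (-a) - T a) * h 0
        : LaurentPolynomial ℤ) = 0 from by rw [sub_eq_zero]; exact hexact]
      exact Ideal.zero_mem _
    · exact hcong s hpos hs
  -- each term is in I after multiplying by T(-2a)
  have hterm : ∀ s ≤ n, (C ((p : ℤ) ^ s) * (T (-2 * a) * (f s - g s)) : LaurentPolynomial ℤ) ∈ I := by
    intro s hs
    have hAs := hA s hs
    rw [Ideal.mem_span_singleton] at hAs
    obtain ⟨r, hr⟩ := hAs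
    have hdecomp : (C ((p : ℤ) ^ s) * (T (-2 * a) * (f s - g s)) : LaurentPolynomial ℤ)
        = C ((p : ℤ) ^ s) * ((T ((p : ℤ) ^ (n - s)) - T (-(p : ℤ) ^ (n - s))) * r)
          + C ((p : ℤ) ^ s) * ((T (-a) - T a) * h s)
          + C ((p : ℤ) ^ s) * ((T (2 * a) - T (-2 * a)) * g s) := by
      rw [← hr]; ring
    rw [hdecomp]
    refine add_mem (add_mem ?_ ?_) ?_
    · rw [← mul_assoc]
      exact Ideal.mul_mem_right _ _ (lem1 s hs)
    · refine Ideal.mul_mem_left _ _ (Ideal.mul_mem_right _ _ ?_)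
      have : (T (-a) - T a : LaurentPolynomial ℤ) = -(T a - T (-a)) := by ring
      rw [this]; exact neg_mem lem2
    · exact Ideal.mul_mem_left _ _ (Ideal.mul_mem_right _ _ lem3)
  -- sum
  have hsum : (T (-2 * a) * ((∑ s ∈ Finset.range (n + 1), C ((p : ℤ) ^ s) * f s)
      - (∑ s ∈ Finset.range (n + 1), C ((p : ℤ) ^ s) * g s)) : LaurentPolynomial ℤ)
      = ∑ s ∈ Finset.range (n + 1), C ((p : ℤ) ^ s) * (T (-2 * a) * (f s - g s)) := by
    rw [mul_sub, Finset.mul_sum, Finset.mul_sum, ← Finset.sum_sub_distrib]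
    exact Finset.sum_congr rfl fun s _ => by ring
  have hmem : (T (-2 * a) * ((∑ s ∈ Finset.range (n + 1), C ((p : ℤ) ^ s) * f s)
      - (∑ s ∈ Finset.range (n + 1), C ((p : ℤ) ^ s) * g s)) : LaurentPolynomial ℤ) ∈ I := by
    rw [hsum]
    exact Ideal.sum_mem _ fun s hsmem =>
      hterm s (Nat.lt_succ_iff.mp (Finset.mem_range.mp hsmem))
  have hfinal : ((∑ s ∈ Finset.range (n + 1), C ((p : ℤ) ^ s) * f s)
      - (∑ s ∈ Finset.range (n + 1), C ((p : ℤ) ^ s) * g s) : LaurentPolynomial ℤ)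
      = T (2 * a) * (T (-2 * a) * ((∑ s ∈ Finset.range (n + 1), C ((p : ℤ) ^ s) * f s)
      - (∑ s ∈ Finset.range (n + 1), C ((p : ℤ) ^ s) * g s))) := by
    rw [← mul_assoc, ← T_add]
    norm_num
  rw [hfinal]
  exact Ideal.mul_mem_left _ _ hmem
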